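/- arXiv:1911.10387 — 3 statements merged into one kernel-verified Lean document; each statement's English description precedes it below -/
import Mathlib

section
/- Let f₁ and f₂ be probability densities on [0,∞)² that vanish outside 𝓜 = [0,M₁]×[0,M₂], and suppose the censoring density g satisfies g(t) ≤ K̄ for all t ≥ 0. Then there exists a constant C > 0, depending only on K̄, M₁ and M₂ (and not on f₁, f₂), such that ‖s_{f₁} − s_{f₂}‖₁ ≤ C · ‖f₁ − f₂‖_∞, where ‖·‖₁ is the L¹-norm with respect to μ and ‖·‖_∞ is the supremum norm on 𝓜. -/
open MeasureTheory Set Real Filter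

noncomputable section

/-- The set 𝓜 = [0,M₁]×[0,M₂]. -/
def Mset (M₁ M₂ : ℝ) : Set (ℝ × ℝ) := Icc 0 M₁ ×ˢ Icc 0 M₂

/-- The dominating measure μ on ℝ²: two-dimensional Lebesgue measure plus one-dimensional
Lebesgue measure on the horizontal half-axis `[0,∞) × {0}`. -/
def domMeasure : Measure (ℝ × ℝ) :=
  volume + Measure.map (fun x : ℝ => (x, (0 : ℝ))) (volume.restrict (Ici 0))

/-- ∂₂F(t,z) = ∫₀ᵗ f(u,z) du. -/
def d2F (f : ℝ × ℝ → ℝ) (t z : ℝ) : ℝ := ∫ u in (0 : ℝ)..t, f (u, z)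

/-- The marginal distribution function F_X(t) = ∫₀ᵗ ∫₀^∞ f(u,v) dv du. -/
def margX (f : ℝ × ℝ → ℝ) (t : ℝ) : ℝ := ∫ u in (0 : ℝ)..t, ∫ v in Ioi (0 : ℝ), f (u, v)

/-- The observed-data density
`s_f(t,z) = g(t)·(1{z>0}·∂₂F(t,z) + 1{z=0}·(1 − F_X(t)))`. -/
def sDens (f : ℝ × ℝ → ℝ) (g : ℝ → ℝ) (w : ℝ × ℝ) : ℝ :=
  g w.1 * (if 0 < w.2 then d2F f w.1 w.2 else if w.2 = 0 then 1 - margX f w.1 else 0)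

/-- `f` is a probability density on [0,∞)² vanishing outside 𝓜 = [0,M₁]×[0,M₂]. -/
def IsDensityOn (f : ℝ × ℝ → ℝ) (M₁ M₂ : ℝ) : Prop :=
  Measurable f ∧ (∀ p, 0 ≤ f p) ∧ (∀ p, p ∉ Mset M₁ M₂ → f p = 0) ∧ (∫ p, f p) = 1

/-- `g` is a probability density on [0,∞). -/
def IsCensDensity (g : ℝ → ℝ) : Prop :=
  Measurable g ∧ (∀ t, 0 ≤ g t) ∧ (∀ t, t < 0 → g t = 0) ∧ (∫ t, g t) = 1

private lemma myIntegrableOfIntegralEqOne {α : Type*} [MeasurableSpace α] {μ : Measure α}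
    {f : α → ℝ} (h1 : (∫ x, f x ∂μ) = 1) : Integrable f μ := by
  by_contra h
  rw [integral_undef h] at h1
  norm_num at h1

/-- Lemma on the L¹ distance of observed-data densities:
there is a constant `C > 0` depending only on `K̄, M₁, M₂` such that for all densities
`f₁, f₂` on 𝓜 and every uniform bound `D` on `|f₁ − f₂|` over 𝓜,
`‖s_{f₁} − s_{f₂}‖₁ ≤ C · D`. -/
theorem stmt0 (M₁ M₂ Kbar : ℝ) (hM₁ : 0 < M₁) (hM₂ : 0 < M₂) (hK : 0 < Kbar) :
    ∃ C > (0 : ℝ), ∀ g : ℝ → ℝ, IsCensDensity g → (∀ t, 0 ≤ t → g t ≤ Kbar) →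
      ∀ f₁ f₂ : ℝ × ℝ → ℝ, IsDensityOn f₁ M₁ M₂ → IsDensityOn f₂ M₁ M₂ →
        ∀ D : ℝ, (∀ p ∈ Mset M₁ M₂, |f₁ p - f₂ p| ≤ D) →
          (∫ w, |sDens f₁ g w - sDens f₂ g w| ∂domMeasure) ≤ C * D := by
  classical
  refine ⟨M₁ * (M₂ + 1) * (M₂ + 1), by positivity, ?_⟩
  intro g hg _hgK f₁ f₂ hf₁ hf₂ D hD
  obtain ⟨hgm, hg0, hgneg, hg1⟩ := hg
  obtain ⟨hm₁, _h01, hsupp₁, hint₁⟩ := hf₁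
  obtain ⟨hm₂, _h02, hsupp₂, hint₂⟩ := hf₂
  have hD0 : 0 ≤ D := le_trans (abs_nonneg _)
    (hD (0, 0) ⟨⟨le_rfl, hM₁.le⟩, le_rfl, hM₂.le⟩)
  have hgi : Integrable g := myIntegrableOfIntegralEqOne hg1
  have hfi₁ : Integrable f₁ := myIntegrableOfIntegralEqOne hint₁
  have hfi₂ : Integrable f₂ := myIntegrableOfIntegralEqOne hint₂
  -- pointwise bounds on `f₁ - f₂`
  have hpt1 : ∀ z u : ℝ, |f₁ (u, z) - f₂ (u, z)| ≤
      (Icc (0:ℝ) M₁).indicator (fun _ => D) u := by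
    intro z u
    by_cases hu : u ∈ Icc (0:ℝ) M₁
    · rw [indicator_of_mem hu]
      by_cases hz : z ∈ Icc (0:ℝ) M₂
      · exact hD (u, z) ⟨hu, hz⟩
      · rw [hsupp₁ (u, z) (fun hm => hz hm.2), hsupp₂ (u, z) (fun hm => hz hm.2)]
        simpa using hD0
    · rw [indicator_of_notMem hu,
        hsupp₁ (u, z) (fun hm => hu hm.1), hsupp₂ (u, z) (fun hm => hu hm.1)]
      simp
  have hpt2 : ∀ u : ℝ, u ∈ Icc (0:ℝ) M₁ → ∀ v : ℝ, |f₁ (u, v) - f₂ (u, v)| ≤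
      (Icc (0:ℝ) M₂).indicator (fun _ => D) v := by
    intro u hu v
    by_cases hv : v ∈ Icc (0:ℝ) M₂
    · rw [indicator_of_mem hv]
      exact hD (u, v) ⟨hu, hv⟩
    · rw [indicator_of_notMem hv,
        hsupp₁ (u, v) (fun hm => hv hm.2), hsupp₂ (u, v) (fun hm => hv hm.2)]
      simp
  -- integrability and value of indicator integrals
  have hIndInt : ∀ a c : ℝ, Integrable ((Icc (0:ℝ) a).indicator (fun _ => c)) volume := by
    intro a c
    rw [integrable_indicator_iff measurableSet_Icc]
    exact integrableOn_const (by rw [Real.volume_Icc]; exact ENNReal.ofReal_ne_top)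
  have hIndVal : ∀ a c : ℝ, 0 ≤ a →
      (∫ x, (Icc (0:ℝ) a).indicator (fun _ => c) x) = a * c := by
    intro a c ha
    rw [integral_indicator_const c measurableSet_Icc, measureReal_def, Real.volume_Icc, smul_eq_mul,
      ENNReal.toReal_ofReal (by linarith)]
    ring
  -- interval integral bounded by global integral of absolute value
  have habs_int : ∀ (ψ : ℝ → ℝ), Integrable ψ volume → ∀ t : ℝ,
      |∫ u in (0:ℝ)..t, ψ u| ≤ ∫ u, |ψ u| := by
    intro ψ hψ t
    calc |∫ u in (0:ℝ)..t, ψ u| ≤ ∫ u in Set.uIoc (0:ℝ) t, ‖ψ u‖ := by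
          simpa [Real.norm_eq_abs] using
            (intervalIntegral.norm_integral_le_integral_norm_uIoc
              (a := (0:ℝ)) (b := t) (f := ψ) (μ := volume))
      _ ≤ ∫ u, |ψ u| := by
          simpa [Real.norm_eq_abs] using
            setIntegral_le_integral hψ.abs (ae_of_all _ fun u => abs_nonneg (ψ u))
  -- bound on d2F difference
  have hd2F : ∀ z t : ℝ, Integrable (fun u => f₁ (u, z)) volume →
      Integrable (fun u => f₂ (u, z)) volume →
      |d2F f₁ t z - d2F f₂ t z| ≤ M₁ * D := by
    intro z t h1 h2
    have hsub : d2F f₁ t z - d2F f₂ t z = ∫ u in (0:ℝ)..t, (f₁ (u, z) - f₂ (u, z)) :=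
      (intervalIntegral.integral_sub h1.intervalIntegrable h2.intervalIntegrable).symm
    rw [hsub]
    calc |∫ u in (0:ℝ)..t, (f₁ (u, z) - f₂ (u, z))|
        ≤ ∫ u, |f₁ (u, z) - f₂ (u, z)| := habs_int _ (h1.sub h2) t
      _ ≤ ∫ u, (Icc (0:ℝ) M₁).indicator (fun _ => D) u :=
          integral_mono (h1.sub h2).abs (hIndInt M₁ D) (fun u => hpt1 z u)
      _ = M₁ * D := hIndVal M₁ D hM₁.le
  -- the set A = ℝ × (0,∞) and the inner integrals for margX
  set A : Set (ℝ × ℝ) := (univ : Set ℝ) ×ˢ Ioi (0:ℝ) with hA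
  have hAm : MeasurableSet A := MeasurableSet.univ.prod measurableSet_Ioi
  have hprod₁ : Integrable (A.indicator f₁) ((volume : Measure ℝ).prod volume) := by
    rw [← Measure.volume_eq_prod]; exact hfi₁.indicator hAm
  have hprod₂ : Integrable (A.indicator f₂) ((volume : Measure ℝ).prod volume) := by
    rw [← Measure.volume_eq_prod]; exact hfi₂.indicator hAm
  have hφi₁ : Integrable (fun u => ∫ v, A.indicator f₁ (u, v)) volume :=
    hprod₁.integral_prod_left
  have hφi₂ : Integrable (fun u => ∫ v, A.indicator f₂ (u, v)) volume :=
    hprod₂.integral_prod_left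
  have hsecEq : ∀ (f : ℝ × ℝ → ℝ) (u : ℝ),
      (∫ v in Ioi (0:ℝ), f (u, v)) = ∫ v, A.indicator f (u, v) := by
    intro f u
    rw [← integral_indicator measurableSet_Ioi]
    congr 1
    ext v
    by_cases hv : v ∈ Ioi (0:ℝ) <;>
      simp [Set.indicator_apply, hA, hv]
  have hmargEq : ∀ (f : ℝ × ℝ → ℝ) (t : ℝ),
      margX f t = ∫ u in (0:ℝ)..t, ∫ v, A.indicator f (u, v) := by
    intro f t
    exact intervalIntegral.integral_congr (fun u _ => hsecEq f u)
  -- a.e. bound on the difference of the inner integrals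
  have hφbd : ∀ᵐ u : ℝ, |(∫ v, A.indicator f₁ (u, v)) - ∫ v, A.indicator f₂ (u, v)| ≤
      (Icc (0:ℝ) M₁).indicator (fun _ => M₂ * D) u := by
    filter_upwards [hprod₁.prod_right_ae, hprod₂.prod_right_ae] with u h1 h2
    by_cases hu : u ∈ Icc (0:ℝ) M₁
    · rw [indicator_of_mem hu, ← integral_sub h1 h2]
      calc |∫ v, (A.indicator f₁ (u, v) - A.indicator f₂ (u, v))|
          ≤ ∫ v, |A.indicator f₁ (u, v) - A.indicator f₂ (u, v)| := by
            simpa [Real.norm_eq_abs] using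
              norm_integral_le_integral_norm
                (fun v => A.indicator f₁ (u, v) - A.indicator f₂ (u, v))
        _ ≤ ∫ v, (Icc (0:ℝ) M₂).indicator (fun _ => D) v := by
            refine integral_mono (h1.sub h2).abs (hIndInt M₂ D) fun v => ?_
            by_cases hv : v ∈ Ioi (0:ℝ)
            · have e1 : A.indicator f₁ (u, v) = f₁ (u, v) :=
                indicator_of_mem (by simpa [hA] using hv) f₁
              have e2 : A.indicator f₂ (u, v) = f₂ (u, v) :=
                indicator_of_mem (by simpa [hA] using hv) f₂
              rw [e1, e2]
              exact hpt2 u hu v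
            · have e1 : A.indicator f₁ (u, v) = 0 :=
                indicator_of_notMem (fun hm => hv (by simpa [hA] using hm)) f₁
              have e2 : A.indicator f₂ (u, v) = 0 :=
                indicator_of_notMem (fun hm => hv (by simpa [hA] using hm)) f₂
              rw [e1, e2]
              simpa using Set.indicator_nonneg (fun _ _ => hD0) v
        _ = M₂ * D := hIndVal M₂ D hM₂.le
    · have e1 : (fun v => A.indicator f₁ (u, v)) = fun _ => (0:ℝ) := by
        funext v
        by_cases hv : v ∈ Ioi (0:ℝ)
        · rw [indicator_of_mem (by simpa [hA] using hv) f₁]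
          exact hsupp₁ (u, v) (fun hm => hu hm.1)
        · exact indicator_of_notMem (fun hm => hv (by simpa [hA] using hm)) f₁
      have e2 : (fun v => A.indicator f₂ (u, v)) = fun _ => (0:ℝ) := by
        funext v
        by_cases hv : v ∈ Ioi (0:ℝ)
        · rw [indicator_of_mem (by simpa [hA] using hv) f₂]
          exact hsupp₂ (u, v) (fun hm => hu hm.1)
        · exact indicator_of_notMem (fun hm => hv (by simpa [hA] using hm)) f₂
      rw [e1, e2, indicator_of_notMem hu]
      simp
  -- bound on margX difference
  have hmarg : ∀ t : ℝ, |margX f₁ t - margX f₂ t| ≤ M₁ * (M₂ * D) := by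
    intro t
    rw [hmargEq f₁ t, hmargEq f₂ t,
      ← intervalIntegral.integral_sub hφi₁.intervalIntegrable hφi₂.intervalIntegrable]
    calc |∫ u in (0:ℝ)..t, ((∫ v, A.indicator f₁ (u, v)) - ∫ v, A.indicator f₂ (u, v))|
        ≤ ∫ u, |(∫ v, A.indicator f₁ (u, v)) - ∫ v, A.indicator f₂ (u, v)| :=
          habs_int _ (hφi₁.sub hφi₂) t
      _ ≤ ∫ u, (Icc (0:ℝ) M₁).indicator (fun _ => M₂ * D) u :=
          integral_mono_ae (hφi₁.sub hφi₂).abs (hIndInt M₁ (M₂ * D)) hφbd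
      _ = M₁ * (M₂ * D) := hIndVal M₁ (M₂ * D) hM₁.le
  -- the dominating function B
  set c : ℝ := M₁ * (M₂ + 1) * D with hc
  have hc0 : 0 ≤ c := by positivity
  set B : ℝ × ℝ → ℝ := fun w => g w.1 * (Icc (0:ℝ) M₂).indicator (fun _ => c) w.2 with hB
  have hBm : Measurable B :=
    (hgm.comp measurable_fst).mul
      ((measurable_const.indicator measurableSet_Icc).comp measurable_snd)
  have hφm : Measurable (fun x : ℝ => (x, (0:ℝ))) := measurable_id.prodMk measurable_const
  have hBint_vol : Integrable B (volume : Measure (ℝ × ℝ)) := by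
    rw [Measure.volume_eq_prod]
    exact hgi.mul_prod (hIndInt M₂ c)
  have hBφ : (fun x : ℝ => B (x, (0:ℝ))) = fun x => g x * c := by
    funext x
    simp only [hB]
    rw [indicator_of_mem (show (0:ℝ) ∈ Icc (0:ℝ) M₂ from ⟨le_rfl, hM₂.le⟩)]
  have hBint_map :
      Integrable B (Measure.map (fun x : ℝ => (x, (0:ℝ))) (volume.restrict (Ici 0))) := by
    rw [integrable_map_measure hBm.aestronglyMeasurable hφm.aemeasurable]
    have : (B ∘ fun x : ℝ => (x, (0:ℝ))) = fun x => g x * c := hBφ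
    rw [this]
    exact hgi.restrict.mul_const c
  have hBint : Integrable B domMeasure := by
    unfold domMeasure
    exact hBint_vol.add_measure hBint_map
  -- pointwise domination
  have hdom_pt : ∀ w : ℝ × ℝ,
      (0 < w.2 → Integrable (fun u => f₁ (u, w.2)) volume ∧
        Integrable (fun u => f₂ (u, w.2)) volume) →
      |sDens f₁ g w - sDens f₂ g w| ≤ B w := by
    rintro ⟨t, z⟩ hw
    have hfac : sDens f₁ g (t, z) - sDens f₂ g (t, z) =
        g t * ((if 0 < z then d2F f₁ t z else if z = 0 then 1 - margX f₁ t else 0) -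
          (if 0 < z then d2F f₂ t z else if z = 0 then 1 - margX f₂ t else 0)) := by
      simp only [sDens]; ring
    rw [hfac, abs_mul, abs_of_nonneg (hg0 t)]
    simp only [hB]
    refine mul_le_mul_of_nonneg_left ?_ (hg0 t)
    by_cases hz : 0 < z
    · simp only [if_pos hz]
      by_cases hzM : z ≤ M₂
      · rw [indicator_of_mem (show z ∈ Icc (0:ℝ) M₂ from ⟨hz.le, hzM⟩)]
        obtain ⟨h1, h2⟩ := hw hz
        calc |d2F f₁ t z - d2F f₂ t z| ≤ M₁ * D := hd2F z t h1 h2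
          _ ≤ c := by rw [hc]; nlinarith
      · have e1 : d2F f₁ t z = 0 := by
          unfold d2F
          rw [show (fun u => f₁ (u, z)) = fun _ => (0:ℝ) from
            funext fun u => hsupp₁ (u, z) (fun hm => hzM hm.2.2)]
          simp
        have e2 : d2F f₂ t z = 0 := by
          unfold d2F
          rw [show (fun u => f₂ (u, z)) = fun _ => (0:ℝ) from
            funext fun u => hsupp₂ (u, z) (fun hm => hzM hm.2.2)]
          simp
        rw [e1, e2]
        simpa using Set.indicator_nonneg (fun _ _ => hc0) z
    · simp only [if_neg hz]
      by_cases hz0 : z = 0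
      · subst hz0
        simp only [if_pos rfl, if_true]
        rw [indicator_of_mem (show (0:ℝ) ∈ Icc (0:ℝ) M₂ from ⟨le_rfl, hM₂.le⟩)]
        have : (1 - margX f₁ t) - (1 - margX f₂ t) = -(margX f₁ t - margX f₂ t) := by ring
        rw [this, abs_neg]
        calc |margX f₁ t - margX f₂ t| ≤ M₁ * (M₂ * D) := hmarg t
          _ ≤ c := by rw [hc]; nlinarith
      · simp only [if_neg hz0]
        simpa using Set.indicator_nonneg (fun _ _ => hc0) z
  -- a.e. domination with respect to volume
  have hz_ae : ∀ᵐ w : ℝ × ℝ ∂(volume : Measure (ℝ × ℝ)),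
      Integrable (fun u => f₁ (u, w.2)) volume ∧ Integrable (fun u => f₂ (u, w.2)) volume := by
    have h1 : ∀ᵐ z : ℝ, Integrable (fun u => f₁ (u, z)) volume ∧
        Integrable (fun u => f₂ (u, z)) volume := by
      have a1 : Integrable f₁ ((volume : Measure ℝ).prod volume) := by
        rw [← Measure.volume_eq_prod]; exact hfi₁
      have a2 : Integrable f₂ ((volume : Measure ℝ).prod volume) := by
        rw [← Measure.volume_eq_prod]; exact hfi₂
      exact a1.prod_left_ae.and a2.prod_left_ae
    have hq : Measure.QuasiMeasurePreserving (Prod.snd : ℝ × ℝ → ℝ)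
        (volume : Measure (ℝ × ℝ)) volume := by
      rw [Measure.volume_eq_prod]; exact Measure.quasiMeasurePreserving_snd
    exact hq.ae h1
  have hdom_vol : ∀ᵐ w : ℝ × ℝ ∂(volume : Measure (ℝ × ℝ)),
      |sDens f₁ g w - sDens f₂ g w| ≤ B w :=
    hz_ae.mono fun w hw => hdom_pt w (fun _ => hw)
  -- a.e. domination with respect to the line measure
  have hdom_map : ∀ᵐ w : ℝ × ℝ
      ∂(Measure.map (fun x : ℝ => (x, (0:ℝ))) (volume.restrict (Ici 0))),
      |sDens f₁ g w - sDens f₂ g w| ≤ B w := by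
    rw [ae_iff]
    refine measure_mono_null (fun w hw => ?_)
      (show (Measure.map (fun x : ℝ => (x, (0:ℝ))) (volume.restrict (Ici 0)))
        {w : ℝ × ℝ | w.2 ≠ 0} = 0 from ?_)
    · simp only [mem_setOf_eq] at hw ⊢
      intro h0
      exact hw (hdom_pt w (fun hlt => absurd (h0 ▸ hlt) (lt_irrefl 0)))
    · have hset : {w : ℝ × ℝ | w.2 ≠ 0} = {w : ℝ × ℝ | w.2 = (0:ℝ)}ᶜ := rfl
      rw [hset, Measure.map_apply hφm
        (measurableSet_eq_fun measurable_snd measurable_const).compl]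
      have : (fun x : ℝ => (x, (0:ℝ))) ⁻¹' {w : ℝ × ℝ | w.2 = (0:ℝ)}ᶜ = ∅ := by
        ext x; simp
      rw [this]
      simp
  have hdom : ∀ᵐ w ∂domMeasure, |sDens f₁ g w - sDens f₂ g w| ≤ B w := by
    unfold domMeasure
    rw [ae_add_measure_iff]
    exact ⟨hdom_vol, hdom_map⟩
  -- computing the integral of B
  have hBvol : (∫ w, B w ∂(volume : Measure (ℝ × ℝ))) = M₂ * c := by
    simp only [hB]
    rw [Measure.volume_eq_prod,
      integral_prod_mul g ((Icc (0:ℝ) M₂).indicator (fun _ => c)), hg1, one_mul]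
    exact hIndVal M₂ c hM₂.le
  have hIci : (∫ x in Ici (0:ℝ), g x) = 1 := by
    have hsplit := integral_add_compl (measurableSet_Ici (a := (0:ℝ))) hgi
    have hneg : (∫ x in (Ici (0:ℝ))ᶜ, g x) = 0 := by
      rw [compl_Ici, setIntegral_congr_fun measurableSet_Iio
        (fun x hx => hgneg x hx)]
      simp
    rw [hneg, add_zero] at hsplit
    rw [hsplit, hg1]
  have hBmap : (∫ w, B w
      ∂(Measure.map (fun x : ℝ => (x, (0:ℝ))) (volume.restrict (Ici 0)))) = c := by
    rw [integral_map hφm.aemeasurable hBm.aestronglyMeasurable]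
    calc (∫ x in Ici (0:ℝ), B (x, (0:ℝ))) = ∫ x in Ici (0:ℝ), g x * c := by rw [hBφ]
      _ = (∫ x in Ici (0:ℝ), g x) * c := integral_mul_const c g
      _ = c := by rw [hIci, one_mul]
  -- conclusion
  calc (∫ w, |sDens f₁ g w - sDens f₂ g w| ∂domMeasure) ≤ ∫ w, B w ∂domMeasure :=
        integral_mono_of_nonneg (ae_of_all _ fun w => abs_nonneg _) hBint hdom
    _ = (∫ w, B w ∂(volume : Measure (ℝ × ℝ))) +
        ∫ w, B w ∂(Measure.map (fun x : ℝ => (x, (0:ℝ))) (volume.restrict (Ici 0))) := by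
        unfold domMeasure
        exact integral_add_measure hBint_vol hBint_map
    _ = M₂ * c + c := by rw [hBvol, hBmap]
    _ = M₁ * (M₂ + 1) * (M₂ + 1) * D := by rw [hc]; ring

end
end

section
/- Suppose f₀ is a probability density supported on 𝓜 = [0,M₁]×[0,M₂] that is ρ-Hölder with constant c for some ρ ∈ (0,1], and the censoring density g satisfies g ≤ K̄. Then there exists a constant C′ > 0 depending only on c, ρ, C, K̄, M₁, M₂ such that for every δ > 0 (with M₁/δ, M₂/δ integers) and every probability density f with ‖f − f_{0,δ}‖_∞ ≤ C·δ^ρ, one has ‖s_{f₀} − s_f‖₁ ≤ C′·δ^ρ, and consequently h²(s_{f₀}, s_f) ≤ (C′/2)·δ^ρ. -/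
open MeasureTheory Set Real Filter

noncomputable section

/-- The joint distribution function F(t,z) = ∫₀ᵗ ∫₀ᶻ f(u,v) dv du. -/
def distF (f : ℝ × ℝ → ℝ) (t z : ℝ) : ℝ := ∫ u in (0 : ℝ)..t, ∫ v in (0 : ℝ)..z, f (u, v)

/-- Euclidean distance on ℝ². -/
def eucDist (x y : ℝ × ℝ) : ℝ := Real.sqrt ((x.1 - y.1) ^ 2 + (x.2 - y.2) ^ 2)

/-- `f₀` is ρ-Hölder with constant `c` on 𝓜. -/
def IsHolderOn (f₀ : ℝ × ℝ → ℝ) (c ρ M₁ M₂ : ℝ) : Prop :=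
  ∀ x ∈ Mset M₁ M₂, ∀ y ∈ Mset M₁ M₂, |f₀ x - f₀ y| ≤ c * eucDist x y ^ ρ

/-- The index (starting from 0) of the bin of side `δ` containing `t`, in a grid on `[0,M]`
with `M/δ` an integer; the bins are `[jδ,(j+1)δ)` for `j < M/δ − 1` and the last bin
`[M−δ, M]` is closed, so that the bins partition `[0,M]`. -/
def binIdx (δ M t : ℝ) : ℤ := min ⌊t / δ⌋ (⌊M / δ⌋ - 1)

/-- The binned approximation `f_{0,δ}` of `f₀` on the grid of side `δ` on 𝓜:
on each bin it equals the average of `f₀` over that bin, and it vanishes outside 𝓜. -/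
def binApprox (f₀ : ℝ × ℝ → ℝ) (δ M₁ M₂ : ℝ) (p : ℝ × ℝ) : ℝ :=
  Set.indicator (Mset M₁ M₂)
    (fun q => (δ ^ 2)⁻¹ *
      ∫ u in ((binIdx δ M₁ q.1 : ℝ) * δ)..((binIdx δ M₁ q.1 : ℝ) * δ + δ),
        ∫ v in ((binIdx δ M₂ q.2 : ℝ) * δ)..((binIdx δ M₂ q.2 : ℝ) * δ + δ), f₀ (u, v)) p

/-- The Kullback–Leibler divergence `KL(p,q) = ∫ p·log(p/q) dμ`. -/
def KLdiv (p q : ℝ × ℝ → ℝ) : ℝ := ∫ w, p w * Real.log (p w / q w) ∂domMeasure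

/-- `V(p,q) = ∫ p·(log(p/q))² dμ`. -/
def Vdiv (p q : ℝ × ℝ → ℝ) : ℝ := ∫ w, p w * Real.log (p w / q w) ^ 2 ∂domMeasure

/-- The squared Hellinger distance `h²(p,q) = ½∫(√p − √q)² dμ`. -/
def hellSq (p q : ℝ × ℝ → ℝ) : ℝ :=
  (1 / 2) * ∫ w, (Real.sqrt (p w) - Real.sqrt (q w)) ^ 2 ∂domMeasure

/-- The L¹ distance `‖p − q‖₁ = ∫|p − q| dμ`. -/
def L1dist (p q : ℝ × ℝ → ℝ) : ℝ := ∫ w, |p w - q w| ∂domMeasure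

/-! ### Auxiliary lemmas -/

lemma meas_aux {f : ℝ × ℝ → ℝ} (hf : Measurable f) :
    Measurable fun w : ℝ × ℝ => ∫ u in Ioc (0:ℝ) w.1, f (u, w.2) := by
  have h : Measurable fun q : (ℝ × ℝ) × ℝ =>
      if q.2 ∈ Ioc (0:ℝ) q.1.1 then f (q.2, q.1.2) else 0 := by
    have hs : MeasurableSet {q : (ℝ × ℝ) × ℝ | q.2 ∈ Ioc (0:ℝ) q.1.1} := by
      apply MeasurableSet.inter
      · exact measurableSet_lt measurable_const (measurable_snd)
      · exact measurableSet_le measurable_snd (measurable_fst.comp measurable_fst)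
    exact Measurable.ite hs (hf.comp ((measurable_snd).prodMk
      ((measurable_snd.comp measurable_fst)))) measurable_const
  have := h.stronglyMeasurable.integral_prod_right' (ν := volume)
  have heq : (fun w : ℝ × ℝ => ∫ u in Ioc (0:ℝ) w.1, f (u, w.2))
      = fun w : ℝ × ℝ => ∫ u, (if u ∈ Ioc (0:ℝ) w.1 then f (u, w.2) else 0) := by
    funext w
    rw [← integral_indicator measurableSet_Ioc]
    simp [Set.indicator_apply]
  rw [heq]
  exact this.measurable

lemma meas_aux2 {f : ℝ × ℝ → ℝ} (hf : Measurable f) :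
    Measurable fun w : ℝ × ℝ => ∫ u in Ioc w.1 (0:ℝ), f (u, w.2) := by
  have h : Measurable fun q : (ℝ × ℝ) × ℝ =>
      if q.2 ∈ Ioc q.1.1 (0:ℝ) then f (q.2, q.1.2) else 0 := by
    have hs : MeasurableSet {q : (ℝ × ℝ) × ℝ | q.2 ∈ Ioc q.1.1 (0:ℝ)} := by
      apply MeasurableSet.inter
      · exact measurableSet_lt (measurable_fst.comp measurable_fst) measurable_snd
      · exact measurableSet_le measurable_snd measurable_const
    exact Measurable.ite hs (hf.comp ((measurable_snd).prodMk
      ((measurable_snd.comp measurable_fst)))) measurable_const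
  have := h.stronglyMeasurable.integral_prod_right' (ν := volume)
  have heq : (fun w : ℝ × ℝ => ∫ u in Ioc w.1 (0:ℝ), f (u, w.2))
      = fun w : ℝ × ℝ => ∫ u, (if u ∈ Ioc w.1 (0:ℝ) then f (u, w.2) else 0) := by
    funext w
    rw [← integral_indicator measurableSet_Ioc]
    simp [Set.indicator_apply]
  rw [heq]
  exact this.measurable

lemma meas_d2F {f : ℝ × ℝ → ℝ} (hf : Measurable f) :
    Measurable fun w : ℝ × ℝ => d2F f w.1 w.2 := by
  have : (fun w : ℝ × ℝ => d2F f w.1 w.2) = fun w =>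
      (∫ u in Ioc (0:ℝ) w.1, f (u, w.2)) - ∫ u in Ioc w.1 (0:ℝ), f (u, w.2) := by
    funext w; rfl
  rw [this]
  exact (meas_aux hf).sub (meas_aux2 hf)

lemma meas_margX {f : ℝ × ℝ → ℝ} (hf : Measurable f) : Measurable (margX f) := by
  have hm : Measurable fun u : ℝ => ∫ v in Ioi (0:ℝ), f (u, v) := by
    have : Measurable (fun q : ℝ × ℝ => f (q.1, q.2)) := hf
    exact (this.stronglyMeasurable.integral_prod_right'
      (ν := volume.restrict (Ioi 0))).measurable
  set m := fun u : ℝ => ∫ v in Ioi (0:ℝ), f (u, v) with hmdef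
  have h1 : Measurable fun t : ℝ => ∫ u in Ioc (0:ℝ) t, m u := by
    have hmm : Measurable fun q : ℝ × ℝ => if q.2 ∈ Ioc (0:ℝ) q.1 then m q.2 else 0 := by
      have hs : MeasurableSet {q : ℝ × ℝ | q.2 ∈ Ioc (0:ℝ) q.1} :=
        (measurableSet_lt measurable_const measurable_snd).inter
          (measurableSet_le measurable_snd measurable_fst)
      exact Measurable.ite hs (hm.comp measurable_snd) measurable_const
    have := hmm.stronglyMeasurable.integral_prod_right' (ν := volume)
    have heq : (fun t : ℝ => ∫ u in Ioc (0:ℝ) t, m u)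
        = fun t : ℝ => ∫ u, (if u ∈ Ioc (0:ℝ) t then m u else 0) := by
      funext t
      rw [← integral_indicator measurableSet_Ioc]
      simp [Set.indicator_apply]
    rw [heq]; exact this.measurable
  have h2 : Measurable fun t : ℝ => ∫ u in Ioc t (0:ℝ), m u := by
    have hmm : Measurable fun q : ℝ × ℝ => if q.2 ∈ Ioc q.1 (0:ℝ) then m q.2 else 0 := by
      have hs : MeasurableSet {q : ℝ × ℝ | q.2 ∈ Ioc q.1 (0:ℝ)} :=
        (measurableSet_lt measurable_fst measurable_snd).inter
          (measurableSet_le measurable_snd measurable_const)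
      exact Measurable.ite hs (hm.comp measurable_snd) measurable_const
    have := hmm.stronglyMeasurable.integral_prod_right' (ν := volume)
    have heq : (fun t : ℝ => ∫ u in Ioc t (0:ℝ), m u)
        = fun t : ℝ => ∫ u, (if u ∈ Ioc t (0:ℝ) then m u else 0) := by
      funext t
      rw [← integral_indicator measurableSet_Ioc]
      simp [Set.indicator_apply]
    rw [heq]; exact this.measurable
  have : margX f = fun t => (∫ u in Ioc (0:ℝ) t, m u) - ∫ u in Ioc t (0:ℝ), m u := by
    funext t; rfl
  rw [this]
  exact h1.sub h2

lemma meas_sDens {f : ℝ × ℝ → ℝ} {g : ℝ → ℝ} (hf : Measurable f) (hg : Measurable g) :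
    Measurable (sDens f g) := by
  apply Measurable.mul (hg.comp measurable_fst)
  apply Measurable.ite (measurableSet_lt measurable_const measurable_snd) (meas_d2F hf)
  apply Measurable.ite (measurableSet_eq_fun measurable_snd measurable_const)
    (measurable_const.sub ((meas_margX hf).comp measurable_fst)) measurable_const

lemma sqrt_sub_sq_le_abs_nonneg {x y : ℝ} (hx : 0 ≤ x) (hy : 0 ≤ y) :
    (Real.sqrt x - Real.sqrt y) ^ 2 ≤ |x - y| := by
  rcases le_total y x with h | h
  · have hx2 := Real.sq_sqrt hx
    have hy2 := Real.sq_sqrt hy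
    have h1 := Real.sqrt_nonneg y
    have h2 := Real.sqrt_le_sqrt h
    rw [abs_of_nonneg (by linarith)]
    nlinarith
  · have hx2 := Real.sq_sqrt hx
    have hy2 := Real.sq_sqrt hy
    have h1 := Real.sqrt_nonneg x
    have h2 := Real.sqrt_le_sqrt h
    rw [abs_of_nonpos (by linarith)]
    nlinarith

lemma sqrt_sub_sq_le_abs (x y : ℝ) : (Real.sqrt x - Real.sqrt y) ^ 2 ≤ |x - y| := by
  rcases le_or_gt 0 x with hx | hx
  · rcases le_or_gt 0 y with hy | hy
    · exact sqrt_sub_sq_le_abs_nonneg hx hy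
    · rw [Real.sqrt_eq_zero_of_nonpos hy.le]
      have h2 := Real.sq_sqrt hx
      rw [abs_of_nonneg (by linarith)]
      nlinarith
  · rcases le_or_gt 0 y with hy | hy
    · rw [Real.sqrt_eq_zero_of_nonpos hx.le]
      have h2 := Real.sq_sqrt hy
      rw [abs_of_nonpos (by linarith)]
      nlinarith
    · rw [Real.sqrt_eq_zero_of_nonpos hx.le, Real.sqrt_eq_zero_of_nonpos hy.le]
      simp [abs_nonneg]

lemma binIdx_spec {δ M t : ℝ} (hδ : 0 < δ) {J : ℕ} (hJ : 0 < J) (hM : M = (J : ℝ) * δ)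
    (ht : t ∈ Icc 0 M) :
    0 ≤ ((binIdx δ M t : ℝ) * δ) ∧ (binIdx δ M t : ℝ) * δ ≤ t ∧
      t ≤ (binIdx δ M t : ℝ) * δ + δ ∧ (binIdx δ M t : ℝ) * δ + δ ≤ M := by
  obtain ⟨ht0, htM⟩ := ht
  have hMδ : M / δ = (J : ℝ) := by rw [hM]; field_simp
  have hfloorM : ⌊M / δ⌋ = (J : ℤ) := by rw [hMδ]; exact_mod_cast Int.floor_intCast (J : ℤ)
  set j := binIdx δ M t with hj
  have hjmin : j = min ⌊t / δ⌋ ((J : ℤ) - 1) := by rw [hj, binIdx, hfloorM]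
  have hj0 : 0 ≤ j := by
    rw [hjmin]
    apply le_min
    · exact Int.floor_nonneg.2 (div_nonneg ht0 hδ.le)
    · omega
  have hjle : (j : ℝ) ≤ t / δ := by
    calc (j : ℝ) ≤ (⌊t / δ⌋ : ℝ) := by exact_mod_cast min_le_left _ _
    _ ≤ t / δ := Int.floor_le _
  have hlow : (j : ℝ) * δ ≤ t := by
    rw [← div_mul_cancel₀ t hδ.ne']
    exact mul_le_mul_of_nonneg_right hjle hδ.le
  have hup : t ≤ (j : ℝ) * δ + δ := by
    rcases le_or_gt ⌊t / δ⌋ ((J : ℤ) - 1) with h | h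
    · have : j = ⌊t / δ⌋ := by rw [hjmin]; exact min_eq_left h
      have h2 : t / δ < (j : ℝ) + 1 := by
        rw [this]
        have := Int.lt_floor_add_one (t / δ)
        exact_mod_cast this
      have := (div_lt_iff₀ hδ).1 h2
      nlinarith
    · have hjeq : j = (J : ℤ) - 1 := by rw [hjmin]; exact min_eq_right h.le
      have : (j : ℝ) * δ + δ = (J : ℝ) * δ := by
        rw [hjeq]; push_cast; ring
      rw [this, ← hM]; exact htM
  have hend : (j : ℝ) * δ + δ ≤ M := by
    have : j ≤ (J : ℤ) - 1 := by rw [hjmin]; exact min_le_right _ _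
    have h2 : (j : ℝ) + 1 ≤ (J : ℝ) := by exact_mod_cast by omega
    rw [hM]
    nlinarith
  have hjδ : 0 ≤ (j : ℝ) * δ := by
    have : (0:ℝ) ≤ (j:ℝ) := by exact_mod_cast hj0
    positivity
  exact ⟨hjδ, hlow, hup, hend⟩

lemma vol_Mset (M₁ M₂ : ℝ) :
    volume (Mset M₁ M₂) = ENNReal.ofReal M₁ * ENNReal.ofReal M₂ := by
  rw [Mset, Measure.volume_eq_prod, Measure.prod_prod, Real.volume_Icc, Real.volume_Icc,
    sub_zero, sub_zero]

lemma measurableSet_Mset (M₁ M₂ : ℝ) : MeasurableSet (Mset M₁ M₂) :=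
  (measurableSet_Icc).prod measurableSet_Icc

lemma f0_bounded {M₁ M₂ c ρ : ℝ} (hM₁ : 0 < M₁) (hM₂ : 0 < M₂) (hc : 0 < c) (hρ : 0 < ρ)
    {f₀ : ℝ × ℝ → ℝ}
    (hf₀supp : ∀ p, p ∉ Mset M₁ M₂ → f₀ p = 0) (hf₀int : (∫ p, f₀ p) = 1)
    (hHolder : IsHolderOn f₀ c ρ M₁ M₂) :
    ∀ p, f₀ p ≤ 1 / (M₁ * M₂) + c * (Real.sqrt (M₁ ^ 2 + M₂ ^ 2)) ^ ρ := by
  set R := Real.sqrt (M₁ ^ 2 + M₂ ^ 2) with hR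
  have hInt : Integrable f₀ := by
    by_contra h
    rw [integral_undef h] at hf₀int
    norm_num at hf₀int
  have hvol : volume (Mset M₁ M₂) = ENNReal.ofReal M₁ * ENNReal.ofReal M₂ := vol_Mset _ _
  have hvolfin : volume (Mset M₁ M₂) < ⊤ := by
    rw [hvol]; exact ENNReal.mul_lt_top ENNReal.ofReal_lt_top ENNReal.ofReal_lt_top
  have hvoltoReal : (volume (Mset M₁ M₂)).toReal = M₁ * M₂ := by
    rw [hvol, ENNReal.toReal_mul, ENNReal.toReal_ofReal hM₁.le, ENNReal.toReal_ofReal hM₂.le]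
  have hsetint : ∫ p in Mset M₁ M₂, f₀ p = 1 := by
    rw [setIntegral_eq_integral_of_forall_compl_eq_zero (fun x hx => hf₀supp x hx)]
    exact hf₀int
  intro p
  rcases em (p ∈ Mset M₁ M₂) with hp | hp
  · have hdist : ∀ y ∈ Mset M₁ M₂, eucDist p y ≤ R := by
      intro y hy
      obtain ⟨⟨h1, h2⟩, h3, h4⟩ := hp
      obtain ⟨⟨k1, k2⟩, k3, k4⟩ := hy
      rw [eucDist, hR]
      apply Real.sqrt_le_sqrt
      have e1 : (p.1 - y.1) ^ 2 ≤ M₁ ^ 2 := by nlinarith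
      have e2 : (p.2 - y.2) ^ 2 ≤ M₂ ^ 2 := by nlinarith
      linarith
    have hlb : ∀ y ∈ Mset M₁ M₂, f₀ p - c * R ^ ρ ≤ f₀ y := by
      intro y hy
      have h1 := hHolder p hp y hy
      have h2 : eucDist p y ^ ρ ≤ R ^ ρ :=
        Real.rpow_le_rpow (Real.sqrt_nonneg _) (hdist y hy) hρ.le
      have h3 : c * eucDist p y ^ ρ ≤ c * R ^ ρ := by nlinarith
      have := abs_le.1 h1
      linarith [this.1]
    have hmono : ∫ _q in Mset M₁ M₂, (f₀ p - c * R ^ ρ) ≤ ∫ q in Mset M₁ M₂, f₀ q := by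
      apply setIntegral_mono_on
      · exact integrableOn_const hvolfin.ne
      · exact hInt.integrableOn
      · exact measurableSet_Mset _ _
      · exact hlb
    rw [setIntegral_const, hsetint, measureReal_def, hvoltoReal, smul_eq_mul] at hmono
    have hRpos : 0 ≤ c * R ^ ρ := by positivity
    have hMM : 0 < M₁ * M₂ := by positivity
    rw [div_add' _ _ _ hMM.ne']
    rw [le_div_iff₀ hMM]
    nlinarith
  · rw [hf₀supp p hp]
    positivity

set_option maxHeartbeats 2000000 in
lemma binApprox_close {M₁ M₂ c ρ δ : ℝ} (hM₁ : 0 < M₁) (hM₂ : 0 < M₂) (hc : 0 < c)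
    (hρ : 0 < ρ) (hρ1 : ρ ≤ 1) (hδ : 0 < δ)
    {J K : ℕ} (hJ : 0 < J) (hMJ : M₁ = (J : ℝ) * δ) (hK : 0 < K) (hMK : M₂ = (K : ℝ) * δ)
    {f₀ : ℝ × ℝ → ℝ} {B : ℝ} (hf₀meas : Measurable f₀) (hf₀nonneg : ∀ p, 0 ≤ f₀ p)
    (hB : ∀ p, f₀ p ≤ B)
    (hHolder : IsHolderOn f₀ c ρ M₁ M₂) :
    ∀ p ∈ Mset M₁ M₂, |f₀ p - binApprox f₀ δ M₁ M₂ p| ≤ 2 * c * δ ^ ρ := by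
  intro p hp
  set a := (binIdx δ M₁ p.1 : ℝ) * δ with ha
  set b := (binIdx δ M₂ p.2 : ℝ) * δ with hb
  obtain ⟨ha0, hat, hta, haM⟩ := binIdx_spec hδ hJ hMJ hp.1
  obtain ⟨hb0, hbz, hzb, hbM⟩ := binIdx_spec hδ hK hMK hp.2
  have hB0 : 0 ≤ B := (hf₀nonneg p).trans (hB p)
  have hslice : ∀ u : ℝ, IntervalIntegrable (fun v => f₀ (u, v)) volume b (b + δ) := by
    intro u
    rw [intervalIntegrable_iff]
    apply Integrable.mono' (integrableOn_const (C := B) (ne_of_lt (by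
      rw [Set.uIoc_of_le (by linarith : b ≤ b + δ), Real.volume_Ioc]
      exact ENNReal.ofReal_lt_top)))
    · exact (hf₀meas.comp (measurable_const.prodMk measurable_id)).aestronglyMeasurable
    · exact Filter.Eventually.of_forall fun v => by
        rw [Real.norm_eq_abs, abs_of_nonneg (hf₀nonneg _)]; exact hB _
  set Φ : ℝ → ℝ := fun u => ∫ v in b..(b + δ), f₀ (u, v) with hΦ
  have hΦmeas : Measurable Φ := by
    have h1 : Measurable fun u : ℝ => ∫ v in Ioc b (b + δ), f₀ (u, v) :=
      (hf₀meas.stronglyMeasurable.integral_prod_right'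
        (ν := volume.restrict (Ioc b (b + δ)))).measurable
    have : Φ = fun u => ∫ v in Ioc b (b + δ), f₀ (u, v) := by
      funext u
      simp only [hΦ]
      rw [intervalIntegral.integral_of_le (by linarith : b ≤ b + δ)]
    rw [this]; exact h1
  have hΦbdd : ∀ u, ‖Φ u‖ ≤ B * δ := by
    intro u
    rw [hΦ]
    have := intervalIntegral.norm_integral_le_of_norm_le_const
      (C := B) (f := fun v => f₀ (u, v)) (a := b) (b := b + δ) (fun v _ => by
        rw [Real.norm_eq_abs, abs_of_nonneg (hf₀nonneg _)]; exact hB _)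
    simpa [abs_of_nonneg hδ.le] using this
  have hΦint : IntervalIntegrable Φ volume a (a + δ) := by
    rw [intervalIntegrable_iff]
    apply Integrable.mono' (integrableOn_const (C := B * δ) (ne_of_lt (by
      rw [Set.uIoc_of_le (by linarith : a ≤ a + δ), Real.volume_Ioc]
      exact ENNReal.ofReal_lt_top)))
    · exact hΦmeas.aestronglyMeasurable
    · exact Filter.Eventually.of_forall fun u => hΦbdd u
  have sqrt2_facts : (1:ℝ) ≤ Real.sqrt 2 ∧ Real.sqrt 2 ≤ 2 := by
    have h2 := Real.sq_sqrt (by norm_num : (2:ℝ) ≥ 0)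
    have h0 := Real.sqrt_nonneg 2
    constructor <;> nlinarith
  have hMain : |(∫ u in a..(a + δ), Φ u) - δ ^ 2 * f₀ p|
      ≤ c * (Real.sqrt 2 * δ) ^ ρ * δ ^ 2 := by
    have hconst : (∫ u in a..(a + δ), (δ * f₀ p)) = δ ^ 2 * f₀ p := by
      rw [intervalIntegral.integral_const]
      simp only [add_sub_cancel_left, smul_eq_mul]
      ring
    rw [← hconst, ← intervalIntegral.integral_sub hΦint intervalIntegrable_const]
    have hinner : ∀ u ∈ Set.uIoc a (a + δ), ‖Φ u - δ * f₀ p‖ ≤ c * (Real.sqrt 2 * δ) ^ ρ * δ := by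
      intro u hu
      rw [Set.uIoc_of_le (by linarith : a ≤ a + δ)] at hu
      have hu1 : 0 ≤ u := le_trans ha0 hu.1.le
      have huM : u ≤ M₁ := hu.2.trans haM
      have hconst2 : (δ : ℝ) * f₀ p = ∫ _v in b..(b + δ), f₀ p := by
        rw [intervalIntegral.integral_const]
        simp only [add_sub_cancel_left, smul_eq_mul]
      rw [hconst2, ← intervalIntegral.integral_sub (hslice u) intervalIntegrable_const]
      have hin2 : ∀ v ∈ Set.uIoc b (b + δ), ‖f₀ (u, v) - f₀ p‖ ≤ c * (Real.sqrt 2 * δ) ^ ρ := by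
        intro v hv
        rw [Set.uIoc_of_le (by linarith : b ≤ b + δ)] at hv
        have hv1 : 0 ≤ v := le_trans hb0 hv.1.le
        have hvM : v ≤ M₂ := hv.2.trans hbM
        have hmem : ((u, v) : ℝ × ℝ) ∈ Mset M₁ M₂ := ⟨⟨hu1, huM⟩, ⟨hv1, hvM⟩⟩
        have hH := hHolder (u, v) hmem p hp
        have hdist : eucDist (u, v) p ≤ Real.sqrt 2 * δ := by
          rw [eucDist]
          have h1 : (u - p.1) ^ 2 ≤ δ ^ 2 := by
            have := hu.1
            have := hu.2
            nlinarith [hat, hta]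
          have h2 : (v - p.2) ^ 2 ≤ δ ^ 2 := by
            have := hv.1
            have := hv.2
            nlinarith [hbz, hzb]
          have : (u - p.1) ^ 2 + (v - p.2) ^ 2 ≤ (Real.sqrt 2 * δ) ^ 2 := by
            have h22 : (Real.sqrt 2 * δ) ^ 2 = 2 * δ ^ 2 := by
              rw [mul_pow, Real.sq_sqrt (by norm_num : (2:ℝ) ≥ 0)]
            rw [h22]; linarith
          calc Real.sqrt ((u - p.1) ^ 2 + (v - p.2) ^ 2)
              ≤ Real.sqrt ((Real.sqrt 2 * δ) ^ 2) := Real.sqrt_le_sqrt this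
            _ = Real.sqrt 2 * δ := Real.sqrt_sq (by positivity)
        have hpow : eucDist (u, v) p ^ ρ ≤ (Real.sqrt 2 * δ) ^ ρ :=
          Real.rpow_le_rpow (Real.sqrt_nonneg _) hdist hρ.le
        rw [Real.norm_eq_abs]
        calc |f₀ (u, v) - f₀ p| ≤ c * eucDist (u, v) p ^ ρ := hH
          _ ≤ c * (Real.sqrt 2 * δ) ^ ρ := by nlinarith
      have := intervalIntegral.norm_integral_le_of_norm_le_const hin2
      calc ‖∫ v in b..(b + δ), (f₀ (u, v) - f₀ p)‖
          ≤ c * (Real.sqrt 2 * δ) ^ ρ * |b + δ - b| := this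
        _ = c * (Real.sqrt 2 * δ) ^ ρ * δ := by rw [add_sub_cancel_left, abs_of_nonneg hδ.le]
    have := intervalIntegral.norm_integral_le_of_norm_le_const hinner
    calc |∫ u in a..(a + δ), (Φ u - δ * f₀ p)|
        ≤ c * (Real.sqrt 2 * δ) ^ ρ * δ * |a + δ - a| := this
      _ = c * (Real.sqrt 2 * δ) ^ ρ * δ ^ 2 := by
          rw [add_sub_cancel_left, abs_of_nonneg hδ.le]; ring
  have hbp : binApprox f₀ δ M₁ M₂ p = (δ ^ 2)⁻¹ * ∫ u in a..(a + δ), Φ u := by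
    rw [binApprox, Set.indicator_of_mem hp]
  have hδ2 : (0:ℝ) < δ ^ 2 := by positivity
  have hsplit : f₀ p - binApprox f₀ δ M₁ M₂ p
      = (δ ^ 2)⁻¹ * (δ ^ 2 * f₀ p - ∫ u in a..(a + δ), Φ u) := by
    rw [hbp]; field_simp
  rw [hsplit, abs_mul, abs_of_nonneg (by positivity : (0:ℝ) ≤ (δ ^ 2)⁻¹), abs_sub_comm]
  have hfin : (δ ^ 2)⁻¹ * |(∫ u in a..(a + δ), Φ u) - δ ^ 2 * f₀ p|
      ≤ (δ ^ 2)⁻¹ * (c * (Real.sqrt 2 * δ) ^ ρ * δ ^ 2) := by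
    apply mul_le_mul_of_nonneg_left hMain (by positivity)
  have heq2 : (δ ^ 2)⁻¹ * (c * (Real.sqrt 2 * δ) ^ ρ * δ ^ 2) = c * (Real.sqrt 2 * δ) ^ ρ := by
    field_simp
  have hlast : c * (Real.sqrt 2 * δ) ^ ρ ≤ 2 * c * δ ^ ρ := by
    have hmul : (Real.sqrt 2 * δ) ^ ρ = (Real.sqrt 2) ^ ρ * δ ^ ρ :=
      Real.mul_rpow (Real.sqrt_nonneg 2) hδ.le
    have h1 : (Real.sqrt 2) ^ ρ ≤ (Real.sqrt 2) ^ (1:ℝ) :=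
      Real.rpow_le_rpow_of_exponent_le sqrt2_facts.1 hρ1
    rw [Real.rpow_one] at h1
    have h2 : (Real.sqrt 2) ^ ρ ≤ 2 := h1.trans sqrt2_facts.2
    have hδρ : (0:ℝ) ≤ δ ^ ρ := Real.rpow_nonneg hδ.le ρ
    have hs : (0:ℝ) ≤ (Real.sqrt 2) ^ ρ := Real.rpow_nonneg (Real.sqrt_nonneg 2) ρ
    rw [hmul]
    have h3 : (Real.sqrt 2) ^ ρ * δ ^ ρ ≤ 2 * δ ^ ρ := mul_le_mul_of_nonneg_right h2 hδρ
    nlinarith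
  linarith [hfin.trans_eq heq2]

/-- there is `C′ > 0` depending only on `c, ρ, C, K̄, M₁, M₂` such that for
every grid width `δ > 0` (with `M₁/δ`, `M₂/δ` integers) and every probability density `f`
with `‖f − f_{0,δ}‖_∞ ≤ C·δ^ρ`, one has `‖s_{f₀} − s_f‖₁ ≤ C′·δ^ρ` and
`h²(s_{f₀}, s_f) ≤ (C′/2)·δ^ρ`. -/
theorem stmt2 (M₁ M₂ c ρ C Kup : ℝ)
    (hM₁ : 0 < M₁) (hM₂ : 0 < M₂) (hc : 0 < c) (hρ : 0 < ρ) (hρ1 : ρ ≤ 1)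
    (hC : 0 < C) (hKup : 0 < Kup)
    (f₀ : ℝ × ℝ → ℝ) (g : ℝ → ℝ)
    (hf₀meas : Measurable f₀) (hf₀nonneg : ∀ p, 0 ≤ f₀ p)
    (hf₀supp : ∀ p, p ∉ Mset M₁ M₂ → f₀ p = 0) (hf₀int : (∫ p, f₀ p) = 1)
    (hHolder : IsHolderOn f₀ c ρ M₁ M₂)
    (hg : IsCensDensity g) (hgbdd : ∀ t, 0 ≤ t → g t ≤ Kup) :
    ∃ C' > (0 : ℝ), ∀ δ : ℝ, 0 < δ →
      (∃ J : ℕ, 0 < J ∧ M₁ = (J : ℝ) * δ) → (∃ K : ℕ, 0 < K ∧ M₂ = (K : ℝ) * δ) →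
      ∀ f : ℝ × ℝ → ℝ, Measurable f → (∀ p, 0 ≤ f p) → (∫ p, f p) = 1 →
        (∀ p, |f p - binApprox f₀ δ M₁ M₂ p| ≤ C * δ ^ ρ) →
        L1dist (sDens f₀ g) (sDens f g) ≤ C' * δ ^ ρ ∧
          hellSq (sDens f₀ g) (sDens f g) ≤ (C' / 2) * δ ^ ρ := by
  refine ⟨4 * (2 * c + C) * M₁ * M₂, by positivity, ?_⟩
  rintro δ hδ ⟨J, hJ, hMJ⟩ ⟨K, hK, hMK⟩ f hfmeas hfnn hfint hfclose
  have hε : (0:ℝ) < δ ^ ρ := Real.rpow_pos_of_pos hδ ρ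
  -- integrability of the densities
  have hf₀Int : Integrable f₀ := by
    by_contra h
    rw [integral_undef h] at hf₀int
    norm_num at hf₀int
  have hfInt : Integrable f := by
    by_contra h
    rw [integral_undef h] at hfint
    norm_num at hfint
  have hgInt : Integrable g := by
    by_contra h
    have := hg.2.2.2
    rw [integral_undef h] at this
    norm_num at this
  have hdInt : Integrable (fun p : ℝ × ℝ => |f₀ p - f p|) := (hf₀Int.sub hfInt).abs
  -- `f₀` is bounded
  obtain ⟨B, hB⟩ : ∃ B : ℝ, ∀ p, f₀ p ≤ B :=
    ⟨_, f0_bounded hM₁ hM₂ hc hρ hf₀supp hf₀int hHolder⟩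
  -- pointwise bound on 𝓜
  have hdM : ∀ p ∈ Mset M₁ M₂, |f₀ p - f p| ≤ (2 * c + C) * δ ^ ρ := by
    intro p hp
    have h1 := binApprox_close hM₁ hM₂ hc hρ hρ1 hδ hJ hMJ hK hMK hf₀meas hf₀nonneg hB
      hHolder p hp
    have h2 := hfclose p
    calc |f₀ p - f p| ≤ |f₀ p - binApprox f₀ δ M₁ M₂ p| + |binApprox f₀ δ M₁ M₂ p - f p| :=
          abs_sub_le _ _ _
      _ ≤ 2 * c * δ ^ ρ + C * δ ^ ρ := by
          rw [abs_sub_comm (binApprox f₀ δ M₁ M₂ p) (f p)]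
          exact add_le_add h1 h2
      _ = (2 * c + C) * δ ^ ρ := by ring
  have hdoff : ∀ p ∉ Mset M₁ M₂, |f₀ p - f p| = f p := by
    intro p hp
    rw [hf₀supp p hp, zero_sub, abs_neg, abs_of_nonneg (hfnn p)]
  -- total L¹ distance between f₀ and f
  set Dreal : ℝ := ∫ p, |f₀ p - f p| with hDrealdef
  have hDnn : 0 ≤ Dreal := integral_nonneg fun p => abs_nonneg _
  have hvolfin : volume (Mset M₁ M₂) < ⊤ := by
    rw [vol_Mset]; exact ENNReal.mul_lt_top ENNReal.ofReal_lt_top ENNReal.ofReal_lt_top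
  have hvoltoReal : (volume (Mset M₁ M₂)).toReal = M₁ * M₂ := by
    rw [vol_Mset, ENNReal.toReal_mul, ENNReal.toReal_ofReal hM₁.le,
      ENNReal.toReal_ofReal hM₂.le]
  have hf₀setint : ∫ p in Mset M₁ M₂, f₀ p = 1 := by
    rw [setIntegral_eq_integral_of_forall_compl_eq_zero (fun x hx => hf₀supp x hx)]
    exact hf₀int
  have hI1 : ∫ p in Mset M₁ M₂, |f₀ p - f p| ≤ (2 * c + C) * δ ^ ρ * (M₁ * M₂) := by
    have := setIntegral_mono_on hdInt.integrableOn
      (integrableOn_const hvolfin.ne) (measurableSet_Mset M₁ M₂) hdM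
    rwa [setIntegral_const, measureReal_def, hvoltoReal, smul_eq_mul, mul_comm (M₁ * M₂)] at this
  have hI2 : ∫ p in (Mset M₁ M₂)ᶜ, |f₀ p - f p| ≤ (2 * c + C) * δ ^ ρ * (M₁ * M₂) := by
    have he : ∫ p in (Mset M₁ M₂)ᶜ, |f₀ p - f p| = ∫ p in (Mset M₁ M₂)ᶜ, f p :=
      setIntegral_congr_fun (measurableSet_Mset M₁ M₂).compl fun p hp => hdoff p hp
    have hsum : (∫ p in Mset M₁ M₂, f p) + ∫ p in (Mset M₁ M₂)ᶜ, f p = 1 := by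
      rw [integral_add_compl (measurableSet_Mset M₁ M₂) hfInt, hfint]
    have hlb : (1:ℝ) - ∫ p in Mset M₁ M₂, |f₀ p - f p| ≤ ∫ p in Mset M₁ M₂, f p := by
      have hmono : (∫ p in Mset M₁ M₂, (f₀ p - |f₀ p - f p|)) ≤ ∫ p in Mset M₁ M₂, f p :=
        setIntegral_mono_on (hf₀Int.integrableOn.sub hdInt.integrableOn)
          hfInt.integrableOn (measurableSet_Mset M₁ M₂)
          (fun p _ => by
            have := le_abs_self (f₀ p - f p)
            linarith)
      have e3 : (∫ p in Mset M₁ M₂, (f₀ p - |f₀ p - f p|))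
          = 1 - ∫ p in Mset M₁ M₂, |f₀ p - f p| := by
        rw [integral_sub hf₀Int.integrableOn hdInt.integrableOn, hf₀setint]
      rw [e3] at hmono
      linarith
    linarith
  have hD : Dreal ≤ 2 * (2 * c + C) * δ ^ ρ * (M₁ * M₂) := by
    have := (integral_add_compl (measurableSet_Mset M₁ M₂) hdInt).symm
    rw [hDrealdef]
    rw [this]
    linarith
  -- product structure
  have hprodvol : (volume : Measure (ℝ × ℝ)) = (volume : Measure ℝ).prod volume :=
    Measure.volume_eq_prod ℝ ℝ
  have hf₀Int' : Integrable f₀ ((volume : Measure ℝ).prod volume) := by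
    rw [← hprodvol]; exact hf₀Int
  have hfInt' : Integrable f ((volume : Measure ℝ).prod volume) := by
    rw [← hprodvol]; exact hfInt
  have hdInt' : Integrable (fun p : ℝ × ℝ => |f₀ p - f p|)
      ((volume : Measure ℝ).prod volume) := by
    rw [← hprodvol]; exact hdInt
  have hrestr : (volume : Measure ℝ).prod (volume.restrict (Ioi 0))
      = ((volume : Measure ℝ).prod volume).restrict ((univ : Set ℝ) ×ˢ Ioi (0:ℝ)) := by
    rw [← Measure.prod_restrict, Measure.restrict_univ]
  -- the marginals
  set m₀ : ℝ → ℝ := fun u => ∫ v in Ioi (0:ℝ), f₀ (u, v) with hm₀def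
  set m : ℝ → ℝ := fun u => ∫ v in Ioi (0:ℝ), f (u, v) with hmdef
  have hm₀Int : Integrable m₀ := by
    have h1 : Integrable f₀ ((volume : Measure ℝ).prod (volume.restrict (Ioi (0:ℝ)))) := by
      rw [hrestr]; exact hf₀Int'.restrict
    exact h1.integral_prod_left
  have hmInt : Integrable m := by
    have h1 : Integrable f ((volume : Measure ℝ).prod (volume.restrict (Ioi (0:ℝ)))) := by
      rw [hrestr]; exact hfInt'.restrict
    exact h1.integral_prod_left
  set n : ℝ → ℝ := fun u => ∫ v, |f₀ (u, v) - f (u, v)| with hndef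
  have hnInt : Integrable n := by
    have h1 : Integrable (fun p : ℝ × ℝ => f₀ p - f p) ((volume : Measure ℝ).prod volume) :=
      hf₀Int'.sub hfInt'
    have := h1.integral_norm_prod_left
    simpa [Real.norm_eq_abs] using this
  have hnDreal : ∫ u, n u = Dreal := by
    have := integral_integral (f := fun u v => |f₀ (u, v) - f (u, v)|)
      (by
        have : (Function.uncurry fun u v => |f₀ (u, v) - f (u, v)|)
            = fun p : ℝ × ℝ => |f₀ p - f p| := by
          funext p; rfl
        rw [this]; exact hdInt')
    rw [hDrealdef, hprodvol]
    simpa using this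
  have hmargbound : ∀ t : ℝ, |margX f₀ t - margX f t| ≤ Dreal := by
    intro t
    have e1 : margX f₀ t = ∫ u in (0:ℝ)..t, m₀ u := rfl
    have e2 : margX f t = ∫ u in (0:ℝ)..t, m u := rfl
    have hsub : margX f₀ t - margX f t = ∫ u in (0:ℝ)..t, (m₀ u - m u) := by
      rw [e1, e2, intervalIntegral.integral_sub (hm₀Int.intervalIntegrable)
        (hmInt.intervalIntegrable)]
    have hstep1 : |∫ u in (0:ℝ)..t, (m₀ u - m u)| ≤ ∫ u in Set.uIoc (0:ℝ) t, |m₀ u - m u| := by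
      have := intervalIntegral.norm_integral_le_integral_norm_uIoc
        (f := fun u => m₀ u - m u) (a := (0:ℝ)) (b := t) (μ := volume)
      simpa [Real.norm_eq_abs] using this
    have hstep2 : ∫ u in Set.uIoc (0:ℝ) t, |m₀ u - m u| ≤ ∫ u, |m₀ u - m u| :=
      setIntegral_le_integral (hm₀Int.sub hmInt).abs
        (Filter.Eventually.of_forall fun u => abs_nonneg _)
    have hstep3 : ∫ u, |m₀ u - m u| ≤ ∫ u, n u := by
      apply integral_mono_ae (hm₀Int.sub hmInt).abs hnInt
      filter_upwards [hf₀Int'.prod_right_ae, hfInt'.prod_right_ae] with u h1 h2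
      simp only [Pi.abs_apply, Pi.sub_apply]
      have hsub2 : m₀ u - m u = ∫ v in Ioi (0:ℝ), (f₀ (u, v) - f (u, v)) := by
        rw [hm₀def, hmdef]
        exact (integral_sub h1.integrableOn h2.integrableOn).symm
      rw [hsub2]
      calc |∫ v in Ioi (0:ℝ), (f₀ (u, v) - f (u, v))|
          ≤ ∫ v in Ioi (0:ℝ), |f₀ (u, v) - f (u, v)| := by
            simpa [Real.norm_eq_abs] using
              norm_integral_le_integral_norm (μ := volume.restrict (Ioi (0:ℝ)))
                (fun v => f₀ (u, v) - f (u, v))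
        _ ≤ ∫ v, |f₀ (u, v) - f (u, v)| :=
            setIntegral_le_integral (h1.sub h2).abs
              (Filter.Eventually.of_forall fun v => abs_nonneg _)
        _ = n u := rfl
    rw [hsub]
    calc |∫ u in (0:ℝ)..t, (m₀ u - m u)| ≤ ∫ u in Set.uIoc (0:ℝ) t, |m₀ u - m u| := hstep1
      _ ≤ ∫ u, |m₀ u - m u| := hstep2
      _ ≤ ∫ u, n u := hstep3
      _ = Dreal := hnDreal
  -- lintegral facts
  have Glin : ∫⁻ t, ENNReal.ofReal (g t) = 1 := by
    rw [← ofReal_integral_eq_lintegral_ofReal hgInt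
      (Filter.Eventually.of_forall hg.2.1), hg.2.2.2, ENNReal.ofReal_one]
  have hkmeas : Measurable fun q : ℝ × ℝ => ENNReal.ofReal |f₀ q - f q| :=
    ENNReal.measurable_ofReal.comp (hf₀meas.sub hfmeas).abs
  set ψ : ℝ → ENNReal := fun z => ∫⁻ u, ENNReal.ofReal |f₀ (u, z) - f (u, z)| with hψdef
  have hψmeas : Measurable ψ := by
    rw [hψdef]; exact Measurable.lintegral_prod_left' hkmeas
  have Dlin : (∫⁻ (p : ℝ × ℝ), ENNReal.ofReal |f₀ p - f p|) = ENNReal.ofReal Dreal := by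
    rw [hDrealdef, ofReal_integral_eq_lintegral_ofReal hdInt
      (Filter.Eventually.of_forall fun p => abs_nonneg _)]
  have hψint : ∫⁻ z, ψ z = ENNReal.ofReal Dreal := by
    have hswap := lintegral_lintegral_swap (μ := (volume : Measure ℝ))
      (ν := (volume : Measure ℝ))
      (f := fun u z => ENNReal.ofReal |f₀ (u, z) - f (u, z)|)
      (hkmeas.aemeasurable)
    have hprodeq := lintegral_prod (μ := (volume : Measure ℝ)) (ν := (volume : Measure ℝ))
      (fun p : ℝ × ℝ => ENNReal.ofReal |f₀ p - f p|) hkmeas.aemeasurable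
    rw [hψdef]
    calc (∫⁻ z, ∫⁻ u, ENNReal.ofReal |f₀ (u, z) - f (u, z)|)
        = ∫⁻ u, ∫⁻ z, ENNReal.ofReal |f₀ (u, z) - f (u, z)| := hswap.symm
      _ = ∫⁻ (p : ℝ × ℝ), ENNReal.ofReal |f₀ p - f p|
          ∂((volume : Measure ℝ).prod volume) := hprodeq.symm
      _ = ENNReal.ofReal Dreal := by rw [← hprodvol]; exact Dlin
  -- a.e. slice integrability in the second coordinate
  have hzae : ∀ᵐ z : ℝ ∂(volume : Measure ℝ), z ≠ 0 ∧ Integrable (fun u => f₀ (u, z)) volume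
      ∧ Integrable (fun u => f (u, z)) volume := by
    have h0 : ∀ᵐ z : ℝ ∂(volume : Measure ℝ), z ≠ 0 := by
      have hs : {z : ℝ | ¬ z ≠ 0} = {0} := by ext z; simp
      rw [ae_iff, hs]
      exact Real.volume_singleton
    filter_upwards [h0, hf₀Int'.prod_left_ae, hfInt'.prod_left_ae] with z h1 h2 h3
    exact ⟨h1, h2, h3⟩
  have haeprod : ∀ᵐ w : ℝ × ℝ ∂((volume : Measure ℝ).prod volume),
      w.2 ≠ 0 ∧ Integrable (fun u => f₀ (u, w.2)) volume
        ∧ Integrable (fun u => f (u, w.2)) volume :=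
    Measure.quasiMeasurePreserving_snd.ae hzae
  -- bound for the two-dimensional part
  have hT1 : (∫⁻ w, ENNReal.ofReal |sDens f₀ g w - sDens f g w|
      ∂((volume : Measure ℝ).prod volume)) ≤ ENNReal.ofReal Dreal := by
    have hbd : ∀ᵐ w : ℝ × ℝ ∂((volume : Measure ℝ).prod volume),
        ENNReal.ofReal |sDens f₀ g w - sDens f g w|
          ≤ ENNReal.ofReal (g w.1) * ψ w.2 := by
      filter_upwards [haeprod] with w hw
      obtain ⟨hz0, h1, h2⟩ := hw
      rcases lt_trichotomy w.2 0 with hneg | h0 | hpos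
      · have e0 : sDens f₀ g w = 0 := by
          rw [sDens, if_neg (not_lt.2 hneg.le), if_neg hz0, mul_zero]
        have e0' : sDens f g w = 0 := by
          rw [sDens, if_neg (not_lt.2 hneg.le), if_neg hz0, mul_zero]
        simp [e0, e0']
      · exact absurd h0 hz0
      · have e1 : sDens f₀ g w = g w.1 * d2F f₀ w.1 w.2 := by rw [sDens, if_pos hpos]
        have e2 : sDens f g w = g w.1 * d2F f w.1 w.2 := by rw [sDens, if_pos hpos]
        have hsub : d2F f₀ w.1 w.2 - d2F f w.1 w.2
            = ∫ u in (0:ℝ)..w.1, (f₀ (u, w.2) - f (u, w.2)) := by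
          rw [d2F, d2F, ← intervalIntegral.integral_sub h1.intervalIntegrable
            h2.intervalIntegrable]
        have habs : |d2F f₀ w.1 w.2 - d2F f w.1 w.2|
            ≤ ∫ u, |f₀ (u, w.2) - f (u, w.2)| := by
          rw [hsub]
          calc |∫ u in (0:ℝ)..w.1, (f₀ (u, w.2) - f (u, w.2))|
              ≤ ∫ u in Set.uIoc (0:ℝ) w.1, |f₀ (u, w.2) - f (u, w.2)| := by
                simpa [Real.norm_eq_abs] using
                  intervalIntegral.norm_integral_le_integral_norm_uIoc
                    (f := fun u => f₀ (u, w.2) - f (u, w.2)) (a := (0:ℝ)) (b := w.1)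
                    (μ := volume)
            _ ≤ ∫ u, |f₀ (u, w.2) - f (u, w.2)| := setIntegral_le_integral (h1.sub h2).abs
                (Filter.Eventually.of_forall fun u => abs_nonneg _)
        have hψeq : ENNReal.ofReal (∫ u, |f₀ (u, w.2) - f (u, w.2)|) = ψ w.2 := by
          rw [hψdef]
          exact ofReal_integral_eq_lintegral_ofReal (h1.sub h2).abs
            (Filter.Eventually.of_forall fun u => abs_nonneg _)
        calc ENNReal.ofReal |sDens f₀ g w - sDens f g w|
            = ENNReal.ofReal (g w.1 * |d2F f₀ w.1 w.2 - d2F f w.1 w.2|) := by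
              rw [e1, e2, ← mul_sub, abs_mul, abs_of_nonneg (hg.2.1 w.1)]
          _ = ENNReal.ofReal (g w.1) * ENNReal.ofReal |d2F f₀ w.1 w.2 - d2F f w.1 w.2| :=
              ENNReal.ofReal_mul (hg.2.1 w.1)
          _ ≤ ENNReal.ofReal (g w.1) * ENNReal.ofReal (∫ u, |f₀ (u, w.2) - f (u, w.2)|) :=
              mul_le_mul_right (ENNReal.ofReal_le_ofReal habs) _
          _ = ENNReal.ofReal (g w.1) * ψ w.2 := by rw [hψeq]
    have hmeas2 : Measurable fun w : ℝ × ℝ => ENNReal.ofReal (g w.1) * ψ w.2 :=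
      ((ENNReal.measurable_ofReal.comp hg.1).comp measurable_fst).mul
        (hψmeas.comp measurable_snd)
    calc (∫⁻ w, ENNReal.ofReal |sDens f₀ g w - sDens f g w|
        ∂((volume : Measure ℝ).prod volume))
        ≤ ∫⁻ w, ENNReal.ofReal (g w.1) * ψ w.2 ∂((volume : Measure ℝ).prod volume) :=
          lintegral_mono_ae hbd
      _ = ∫⁻ t, ∫⁻ z, ENNReal.ofReal (g t) * ψ z :=
          lintegral_prod _ hmeas2.aemeasurable
      _ = ∫⁻ t, ENNReal.ofReal (g t) * ∫⁻ z, ψ z := by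
          congr 1
          funext t
          exact lintegral_const_mul _ hψmeas
      _ = (∫⁻ t, ENNReal.ofReal (g t)) * ∫⁻ z, ψ z :=
          lintegral_mul_const'' _ (ENNReal.measurable_ofReal.comp hg.1).aemeasurable
      _ = ENNReal.ofReal Dreal := by rw [Glin, one_mul, hψint]
  -- bound for the one-dimensional part
  have hdSmeas : Measurable fun w : ℝ × ℝ => ENNReal.ofReal |sDens f₀ g w - sDens f g w| :=
    ENNReal.measurable_ofReal.comp
      ((meas_sDens hf₀meas hg.1).sub (meas_sDens hfmeas hg.1)).abs
  have hT2 : (∫⁻ w, ENNReal.ofReal |sDens f₀ g w - sDens f g w|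
      ∂(Measure.map (fun x : ℝ => (x, (0:ℝ))) (volume.restrict (Ici 0))))
        ≤ ENNReal.ofReal Dreal := by
    rw [lintegral_map hdSmeas (show Measurable fun x : ℝ => (x, (0:ℝ)) from measurable_id.prodMk measurable_const)]
    have hpt : ∀ x : ℝ, ENNReal.ofReal |sDens f₀ g (x, 0) - sDens f g (x, 0)|
        ≤ ENNReal.ofReal (g x) * ENNReal.ofReal Dreal := by
      intro x
      have e1 : sDens f₀ g (x, 0) = g x * (1 - margX f₀ x) := by simp [sDens]
      have e2 : sDens f g (x, 0) = g x * (1 - margX f x) := by simp [sDens]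
      have e3 : |sDens f₀ g (x, 0) - sDens f g (x, 0)| = g x * |margX f₀ x - margX f x| := by
        rw [e1, e2, ← mul_sub, abs_mul, abs_of_nonneg (hg.2.1 x),
          show (1 - margX f₀ x) - (1 - margX f x) = -(margX f₀ x - margX f x) by ring,
          abs_neg]
      rw [e3, ENNReal.ofReal_mul (hg.2.1 x)]
      exact mul_le_mul_right (ENNReal.ofReal_le_ofReal (hmargbound x)) _
    calc (∫⁻ x, ENNReal.ofReal |sDens f₀ g (x, 0) - sDens f g (x, 0)|
        ∂(volume.restrict (Ici 0)))
        ≤ ∫⁻ x, ENNReal.ofReal (g x) * ENNReal.ofReal Dreal ∂(volume.restrict (Ici 0)) :=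
          lintegral_mono hpt
      _ ≤ ∫⁻ x, ENNReal.ofReal (g x) * ENNReal.ofReal Dreal :=
          lintegral_mono' Measure.restrict_le_self le_rfl
      _ = (∫⁻ x, ENNReal.ofReal (g x)) * ENNReal.ofReal Dreal :=
          lintegral_mul_const' _ _ ENNReal.ofReal_ne_top
      _ = ENNReal.ofReal Dreal := by rw [Glin, one_mul]
  -- total bound
  have hC'nn : (0:ℝ) ≤ 4 * (2 * c + C) * M₁ * M₂ * δ ^ ρ := by positivity
  have hLtot : (∫⁻ w, ENNReal.ofReal |sDens f₀ g w - sDens f g w| ∂domMeasure)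
      ≤ ENNReal.ofReal (4 * (2 * c + C) * M₁ * M₂ * δ ^ ρ) := by
    rw [domMeasure, lintegral_add_measure]
    have h1 : (∫⁻ w, ENNReal.ofReal |sDens f₀ g w - sDens f g w|
        ∂(volume : Measure (ℝ × ℝ))) ≤ ENNReal.ofReal Dreal := by
      rw [hprodvol]; exact hT1
    calc (∫⁻ w, ENNReal.ofReal |sDens f₀ g w - sDens f g w| ∂(volume : Measure (ℝ × ℝ)))
        + (∫⁻ w, ENNReal.ofReal |sDens f₀ g w - sDens f g w|
          ∂(Measure.map (fun x : ℝ => (x, (0:ℝ))) (volume.restrict (Ici 0))))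
        ≤ ENNReal.ofReal Dreal + ENNReal.ofReal Dreal := add_le_add h1 hT2
      _ = ENNReal.ofReal (Dreal + Dreal) := (ENNReal.ofReal_add hDnn hDnn).symm
      _ ≤ ENNReal.ofReal (4 * (2 * c + C) * M₁ * M₂ * δ ^ ρ) :=
          ENNReal.ofReal_le_ofReal (by nlinarith [hD])
  -- conclusion: L¹ bound
  have hL1 : L1dist (sDens f₀ g) (sDens f g) ≤ 4 * (2 * c + C) * M₁ * M₂ * δ ^ ρ := by
    rw [L1dist, integral_eq_lintegral_of_nonneg_ae (f := fun w => |sDens f₀ g w - sDens f g w|)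
      (Filter.Eventually.of_forall fun w => abs_nonneg _)
      (((meas_sDens hf₀meas hg.1).sub (meas_sDens hfmeas hg.1)).abs.aestronglyMeasurable)]
    have h2 := ENNReal.toReal_mono ENNReal.ofReal_ne_top hLtot
    rwa [ENNReal.toReal_ofReal hC'nn] at h2
  refine ⟨hL1, ?_⟩
  -- conclusion: Hellinger bound
  rw [hellSq]
  have hsqmeas : Measurable fun w : ℝ × ℝ =>
      (Real.sqrt (sDens f₀ g w) - Real.sqrt (sDens f g w)) ^ 2 :=
    ((Real.continuous_sqrt.measurable.comp (meas_sDens hf₀meas hg.1)).sub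
      (Real.continuous_sqrt.measurable.comp (meas_sDens hfmeas hg.1))).pow_const 2
  rw [integral_eq_lintegral_of_nonneg_ae (Filter.Eventually.of_forall fun w => sq_nonneg _)
    hsqmeas.aestronglyMeasurable]
  have hle2 : (∫⁻ w, ENNReal.ofReal
      ((Real.sqrt (sDens f₀ g w) - Real.sqrt (sDens f g w)) ^ 2) ∂domMeasure)
      ≤ ENNReal.ofReal (4 * (2 * c + C) * M₁ * M₂ * δ ^ ρ) :=
    le_trans (lintegral_mono fun w => ENNReal.ofReal_le_ofReal (sqrt_sub_sq_le_abs _ _)) hLtot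
  have h3 := ENNReal.toReal_mono ENNReal.ofReal_ne_top hle2
  rw [ENNReal.toReal_ofReal hC'nn] at h3
  calc (1 / 2 : ℝ) * (∫⁻ w, ENNReal.ofReal
      ((Real.sqrt (sDens f₀ g w) - Real.sqrt (sDens f g w)) ^ 2) ∂domMeasure).toReal
      ≤ (1 / 2) * (4 * (2 * c + C) * M₁ * M₂ * δ ^ ρ) := by linarith
    _ = 4 * (2 * c + C) * M₁ * M₂ / 2 * δ ^ ρ := by ring

end
end

section
/- Let F and F₀ be bivariate distribution functions of probability densities f and f₀ on 𝓜 = [0,M₁]×[0,M₂], and suppose the X-marginal density of f is bounded: ∫₀^{M₂} f(x,v) dv ≤ B for all x ∈ [0,M₁]. Fix t ∈ [0,M₁), z ∈ (0,M₂], C, η > 0 and h > 0 with t + h ≤ M₁ and B·h ≤ C·η/2. If F(t,z) ≤ F₀(t,z) − C·η, then F(x,z) − F₀(x,z) ≤ −C·η/2 for every x ∈ [t, t+h]; consequently, if g ≥ K̲ on (0,M₁), then ∫_t^{t+h} g(x)·(F(x,z) − F₀(x,z)) dx ≤ −(C·K̲/2)·η·h. -/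
open MeasureTheory Set Real Filter

noncomputable section

/-
Moving `x` from `t` to `t + h` raises `F(x,z)` by at most `B h ≤ Cη/2`, since the mass of `f` in
the strip `[t,x] × [0,z]` is at most that of its X-marginal over `[t,x]`, while `F₀(x,z)` does not
decrease. So `F - F₀ ≤ -Cη/2` on `[t,t+h]`, and integrating against `g ≥ K̲` gives the second bound.
-/
lemma IsDensityOn.integrable {f : ℝ × ℝ → ℝ} {M₁ M₂ : ℝ} (hf : IsDensityOn f M₁ M₂) :
    Integrable f :=
  Integrable.of_integral_ne_zero (by rw [hf.2.2.2]; exact one_ne_zero)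

lemma IsCensDensity.integrable {g : ℝ → ℝ} (hg : IsCensDensity g) : Integrable g :=
  Integrable.of_integral_ne_zero (by rw [hg.2.2.2]; exact one_ne_zero)

lemma MeasureTheory.Integrable.intervalIntegral_prod_right {f : ℝ × ℝ → ℝ} (hf : Integrable f) (a b : ℝ) :
    Integrable fun u => ∫ v in a..b, f (u, v) := by
  have hset : ∀ s : Set ℝ, Integrable fun u => ∫ v in s, f (u, v) := fun s => by
    rw [Measure.volume_eq_prod] at hf
    have hrestr := hf.restrict (s := univ ×ˢ s)
    rw [← Measure.prod_restrict, Measure.restrict_univ] at hrestr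
    exact hrestr.integral_prod_left
  exact (hset _).sub (hset _)

lemma continuous_distF {f : ℝ × ℝ → ℝ} (hf : Integrable f) (z : ℝ) :
    Continuous fun x => distF f x z :=
  (hf.intervalIntegral_prod_right 0 z).continuous_primitive 0

lemma distF_sub_distF {f : ℝ × ℝ → ℝ} (hf : Integrable f) (a b z : ℝ) :
    distF f b z - distF f a z = ∫ u in a..b, ∫ v in (0 : ℝ)..z, f (u, v) :=
  intervalIntegral.integral_interval_sub_left (hf.intervalIntegral_prod_right 0 z).intervalIntegrable
    (hf.intervalIntegral_prod_right 0 z).intervalIntegrable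

lemma distF_le_distF {f : ℝ × ℝ → ℝ} (hf : Integrable f) (hf0 : 0 ≤ f) {a b z : ℝ}
    (hab : a ≤ b) (hz : 0 ≤ z) : distF f a z ≤ distF f b z := by
  have hinc : 0 ≤ distF f b z - distF f a z := by
    rw [distF_sub_distF hf]
    exact intervalIntegral.integral_nonneg hab fun u _ =>
      intervalIntegral.integral_nonneg hz fun v _ => hf0 _
  linarith

lemma distF_sub_distF_le {f : ℝ × ℝ → ℝ} (hf : Integrable f) (hf0 : 0 ≤ f) {a b z M B : ℝ}
    (hab : a ≤ b) (hz : 0 ≤ z) (hzM : z ≤ M)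
    (hmarg : ∀ u ∈ Icc a b, ∫ v in (0 : ℝ)..M, f (u, v) ≤ B) :
    distF f b z - distF f a z ≤ B * (b - a) := by
  have hslice : ∀ᵐ u, Integrable fun v => f (u, v) := by
    rw [Measure.volume_eq_prod] at hf
    exact hf.prod_right_ae
  have hstrip : ∀ᵐ u ∂volume.restrict (Icc a b), ∫ v in (0 : ℝ)..z, f (u, v) ≤ B := by
    refine (ae_restrict_iff' measurableSet_Icc).2 ?_
    filter_upwards [hslice] with u hu hmem
    calc ∫ v in (0 : ℝ)..z, f (u, v)
        ≤ ∫ v in (0 : ℝ)..M, f (u, v) :=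
          intervalIntegral.integral_mono_interval le_rfl hz hzM
            (Eventually.of_forall fun v => hf0 _) hu.intervalIntegrable
      _ ≤ B := hmarg u hmem
  calc distF f b z - distF f a z = ∫ u in a..b, ∫ v in (0 : ℝ)..z, f (u, v) :=
        distF_sub_distF hf a b z
    _ ≤ ∫ _ in a..b, B := intervalIntegral.integral_mono_ae_restrict hab
        (hf.intervalIntegral_prod_right 0 z).intervalIntegrable intervalIntegrable_const hstrip
    _ = B * (b - a) := by rw [intervalIntegral.integral_const, smul_eq_mul, mul_comm]

lemma intervalIntegral_mul_le_neg {g d : ℝ → ℝ} {a b K c : ℝ} (hab : a ≤ b)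
    (hg : IntervalIntegrable g volume a b) (hd : Continuous d) (hK : 0 ≤ K) (hc : 0 ≤ c)
    (hgK : ∀ x ∈ Ioo a b, K ≤ g x) (hdc : ∀ x ∈ Icc a b, d x ≤ -c) :
    ∫ x in a..b, g x * d x ≤ -(K * c * (b - a)) := by
  have hpt : ∀ x ∈ Ioo a b, g x * d x ≤ K * -c := fun x hx => by
    have hKg := hgK x hx
    have hdx := hdc x (Ioo_subset_Icc_self hx)
    nlinarith
  calc ∫ x in a..b, g x * d x ≤ ∫ _ in a..b, K * -c :=
        intervalIntegral.integral_mono_on_of_le_Ioo hab (hg.mul_continuousOn hd.continuousOn)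
          intervalIntegrable_const hpt
    _ = -(K * c * (b - a)) := by rw [intervalIntegral.integral_const, smul_eq_mul]; ring

theorem stmt11_general (M₁ M₂ B Klow C η h t z : ℝ)
    (hB : 0 < B) (hKlow : 0 < Klow)
    (hC : 0 < C) (hη : 0 < η) (hh : 0 < h)
    (ht : t ∈ Ico (0 : ℝ) M₁) (hz : z ∈ Ioc (0 : ℝ) M₂)
    (hth : t + h ≤ M₁) (hsmall : B * h ≤ C * η / 2)
    (f f₀ : ℝ × ℝ → ℝ) (g : ℝ → ℝ)
    (hf : IsDensityOn f M₁ M₂) (hf₀ : IsDensityOn f₀ M₁ M₂)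
    (hmarg : ∀ x ∈ Icc (0 : ℝ) M₁, (∫ v in (0 : ℝ)..M₂, f (x, v)) ≤ B)
    (hg : IsCensDensity g)
    (hdev : distF f t z ≤ distF f₀ t z - C * η) :
    (∀ x ∈ Icc t (t + h), distF f x z - distF f₀ x z ≤ -(C * η / 2)) ∧
      ((∀ x ∈ Ioo (0 : ℝ) M₁, Klow ≤ g x) →
        (∫ x in t..(t + h), g x * (distF f x z - distF f₀ x z)) ≤
          -((C * Klow / 2) * η * h)) := by
  have hdiff : ∀ x ∈ Icc t (t + h), distF f x z - distF f₀ x z ≤ -(C * η / 2) := by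
    intro x hx
    have hrise_f := distF_sub_distF_le hf.integrable hf.2.1 hx.1 hz.1.le hz.2
      fun u hu => hmarg u ⟨ht.1.trans hu.1, hu.2.trans (hx.2.trans hth)⟩
    have hrise_f₀ := distF_le_distF hf₀.integrable hf₀.2.1 hx.1 hz.1.le
    have hBh : B * (x - t) ≤ B * h := mul_le_mul_of_nonneg_left (by linarith [hx.2]) hB.le
    linarith
  refine ⟨hdiff, fun hgK => ?_⟩
  calc ∫ x in t..(t + h), g x * (distF f x z - distF f₀ x z)
      ≤ -(Klow * (C * η / 2) * (t + h - t)) :=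
        intervalIntegral_mul_le_neg (by linarith) hg.integrable.intervalIntegrable
          ((continuous_distF hf.integrable z).sub (continuous_distF hf₀.integrable z))
          hKlow.le (by positivity)
          (fun x hx => hgK x ⟨ht.1.trans_lt hx.1, hx.2.trans_le hth⟩) hdiff
    _ = -((C * Klow / 2) * η * h) := by ring

/-- deviation bound used at the boundary point `t = 0`: if the X-marginal
density of `f` is bounded by `B` on `[0,M₁]`, `t + h ≤ M₁`, `B·h ≤ C·η/2` and
`F(t,z) ≤ F₀(t,z) − C·η`, then `F(x,z) − F₀(x,z) ≤ −C·η/2` for all `x ∈ [t,t+h]`;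
consequently, if `g ≥ K̲` on `(0,M₁)`, then
`∫_t^{t+h} g(x)·(F(x,z) − F₀(x,z)) dx ≤ −(C·K̲/2)·η·h`. -/
theorem stmt11 (M₁ M₂ B Klow C η h t z : ℝ)
    (hM₁ : 0 < M₁) (hM₂ : 0 < M₂) (hB : 0 < B) (hKlow : 0 < Klow)
    (hC : 0 < C) (hη : 0 < η) (hh : 0 < h)
    (ht : t ∈ Ico (0 : ℝ) M₁) (hz : z ∈ Ioc (0 : ℝ) M₂)
    (hth : t + h ≤ M₁) (hsmall : B * h ≤ C * η / 2)
    (f f₀ : ℝ × ℝ → ℝ) (g : ℝ → ℝ)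
    (hf : IsDensityOn f M₁ M₂) (hf₀ : IsDensityOn f₀ M₁ M₂)
    (hmarg : ∀ x ∈ Icc (0 : ℝ) M₁, (∫ v in (0 : ℝ)..M₂, f (x, v)) ≤ B)
    (hg : IsCensDensity g)
    (hdev : distF f t z ≤ distF f₀ t z - C * η) :
    (∀ x ∈ Icc t (t + h), distF f x z - distF f₀ x z ≤ -(C * η / 2)) ∧
      ((∀ x ∈ Ioo (0 : ℝ) M₁, Klow ≤ g x) →
        (∫ x in t..(t + h), g x * (distF f x z - distF f₀ x z)) ≤
          -((C * Klow / 2) * η * h)) :=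
  stmt11_general M₁ M₂ B Klow C η h t z hB hKlow hC hη hh ht hz hth hsmall f f₀ g hf hf₀ hmarg hg
    hdev

end
end
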